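/- For the discrimination game constructed from dual-feasible operators, and for every state ρ' and every POVM set 𝕄'_{A|X} with outcome set {1,…,l} and input set {1,…,κ}: P^D_succ(p, Ψ_{B|Y}, ρ', 𝕄'_{A|X}) ≥ α · tr[Z^ρ ρ'] · ∑_{y=1}^{κ} ∑_{b=1}^{l} tr[M'_{b|y} Z_{b|y}]. -/

import Mathlib

open scoped BigOperators ComplexOrder

noncomputable section

namespace MultiObject

abbrev Mat (d : ℕ) := Matrix (Fin d) (Fin d) ℂ

/-- A quantum state: positive semidefinite with unit trace. -/
def IsState {d : ℕ} (ρ : Mat d) : Prop := ρ.PosSemidef ∧ ρ.trace = 1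

/-- A POVM set `M x a` indexed by input `x : Fin κ` and outcome `a : Fin l`. -/
def IsPOVMSet {d l κ : ℕ} (M : Fin κ → Fin l → Mat d) : Prop :=
  (∀ x a, (M x a).PosSemidef) ∧ (∀ x, ∑ a, M x a = 1)

/-- A probability mass function on a finite type. -/
def IsPMF {n : ℕ} (p : Fin n → ℝ) : Prop := (∀ i, 0 ≤ p i) ∧ ∑ i, p i = 1

/-- Simulability of the POVM set `N` by the POVM set `M` via classical
pre- and post-processing. -/
def Simulable {d l κ m τ : ℕ} (N : Fin τ → Fin m → Mat d)
    (M : Fin κ → Fin l → Mat d) : Prop :=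
  ∃ (nz : ℕ) (q : Fin nz → ℝ) (r : Fin τ → Fin nz → Fin κ → ℝ)
    (s : Fin τ → Fin nz → Fin l → Fin m → ℝ),
    IsPMF q ∧ (∀ y z, IsPMF (r y z)) ∧ (∀ y z a, IsPMF (s y z a)) ∧
    ∀ y b, N y b = ∑ z, ∑ x, ∑ a, (q z * r y z x * s y z a b) • M x a

/-- Compatibility (joint measurability) of a POVM set. -/
def Compatible {d l κ : ℕ} (M : Fin κ → Fin l → Mat d) : Prop :=
  ∃ (nl : ℕ) (G : Fin nl → Mat d) (pc : Fin κ → Fin nl → Fin l → ℝ),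
    (∀ i, (G i).PosSemidef) ∧ (∑ i, G i = 1) ∧ (∀ x lam, IsPMF (pc x lam)) ∧
    ∀ x a, M x a = ∑ lam, pc x lam a • G lam

/-- A subchannel: positive and trace-nonincreasing on PSD matrices. -/
def IsSubchannel {d : ℕ} (φ : Mat d →ₗ[ℂ] Mat d) : Prop :=
  (∀ A : Mat d, A.PosSemidef → (φ A).PosSemidef) ∧
  (∀ A : Mat d, A.PosSemidef → ((φ A).trace).re ≤ (A.trace).re)

/-- An instrument: subchannels summing to a trace-preserving map. -/
def IsInstrument {d m : ℕ} (Φ : Fin m → (Mat d →ₗ[ℂ] Mat d)) : Prop :=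
  (∀ b, IsSubchannel (Φ b)) ∧ (∀ A : Mat d, Matrix.trace (∑ b, Φ b A) = Matrix.trace A)

/-- A multi-object subchannel game: a PMF `p` with positive weights and a
family of instruments with common outcome set. -/
def IsGame {d m τ : ℕ} (p : Fin τ → ℝ) (Φ : Fin τ → Fin m → (Mat d →ₗ[ℂ] Mat d)) : Prop :=
  IsPMF p ∧ (∀ y, 0 < p y) ∧ (∀ y, IsInstrument (Φ y))

/-- The value `∑_{b,y} tr[N_{b|y} φ_{b|y}(ρ)] p(y)`. -/
def gameValue {d m τ : ℕ} (p : Fin τ → ℝ) (Φ : Fin τ → Fin m → (Mat d →ₗ[ℂ] Mat d))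
    (ρ : Mat d) (N : Fin τ → Fin m → Mat d) : ℝ :=
  ∑ y, ∑ b, p y * (Matrix.trace (N y b * Φ y b ρ)).re

/-- Success probability for discrimination. -/
def PsuccD {d l κ m τ : ℕ} (p : Fin τ → ℝ) (Φ : Fin τ → Fin m → (Mat d →ₗ[ℂ] Mat d))
    (ρ : Mat d) (M : Fin κ → Fin l → Mat d) : ℝ :=
  sSup {v : ℝ | ∃ N : Fin τ → Fin m → Mat d, Simulable N M ∧ v = gameValue p Φ ρ N}

/-- Error probability for exclusion. -/
def PerrE {d l κ m τ : ℕ} (p : Fin τ → ℝ) (Φ : Fin τ → Fin m → (Mat d →ₗ[ℂ] Mat d))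
    (ρ : Mat d) (M : Fin κ → Fin l → Mat d) : ℝ :=
  sInf {v : ℝ | ∃ N : Fin τ → Fin m → Mat d, Simulable N M ∧ v = gameValue p Φ ρ N}

/-- Free (normalised) states of a cone `𝓕`. -/
def freeStates {d : ℕ} (𝓕 : Set (Mat d)) : Set (Mat d) := {σ ∈ 𝓕 | Matrix.trace σ = 1}

/-- Feasible set for the generalised robustness of a state. -/
def RFSet {d : ℕ} (F : Set (Mat d)) (ρ : Mat d) : Set ℝ :=
  {r : ℝ | 0 ≤ r ∧ ∃ ρG σ : Mat d, IsState ρG ∧ σ ∈ F ∧ ρ + r • ρG = (1 + r) • σ}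

/-- Generalised robustness of a state. -/
def RF {d : ℕ} (F : Set (Mat d)) (ρ : Mat d) : ℝ := sInf (RFSet F ρ)

/-- Feasible set for the weight of resource of a state. -/
def WFSet {d : ℕ} (F : Set (Mat d)) (ρ : Mat d) : Set ℝ :=
  {w : ℝ | 0 ≤ w ∧ w ≤ 1 ∧ ∃ ρG σ : Mat d, IsState ρG ∧ σ ∈ F ∧ ρ = w • ρG + (1 - w) • σ}

/-- Weight of resource of a state. -/
def WF {d : ℕ} (F : Set (Mat d)) (ρ : Mat d) : ℝ := sInf (WFSet F ρ)

/-- Feasible set for the generalised robustness of a POVM set. -/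
def RFMSet {d l κ : ℕ} (𝔽 : Set (Fin κ → Fin l → Mat d))
    (M : Fin κ → Fin l → Mat d) : Set ℝ :=
  {r : ℝ | 0 ≤ r ∧ ∃ G Ff : Fin κ → Fin l → Mat d, IsPOVMSet G ∧ Ff ∈ 𝔽 ∧
     ∀ x a, M x a + r • G x a = (1 + r) • Ff x a}

/-- Generalised robustness of a POVM set. -/
def RFM {d l κ : ℕ} (𝔽 : Set (Fin κ → Fin l → Mat d)) (M : Fin κ → Fin l → Mat d) : ℝ :=
  sInf (RFMSet 𝔽 M)

/-- Feasible set for the weight of resource of a POVM set. -/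
def WFMSet {d l κ : ℕ} (𝔽 : Set (Fin κ → Fin l → Mat d))
    (M : Fin κ → Fin l → Mat d) : Set ℝ :=
  {w : ℝ | 0 ≤ w ∧ w ≤ 1 ∧ ∃ G Ff : Fin κ → Fin l → Mat d, IsPOVMSet G ∧ Ff ∈ 𝔽 ∧
     ∀ x a, M x a = w • G x a + (1 - w) • Ff x a}

/-- Weight of resource of a POVM set. -/
def WFM {d l κ : ℕ} (𝔽 : Set (Fin κ → Fin l → Mat d)) (M : Fin κ → Fin l → Mat d) : ℝ :=
  sInf (WFMSet 𝔽 M)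

/-- Conic hull of a set in a real module. -/
def conicHull {α : Type*} [AddCommMonoid α] [Module ℝ α] (S : Set α) : Set α :=
  {A | ∃ (n : ℕ) (c : Fin n → ℝ) (f : Fin n → α),
    (∀ i, 0 ≤ c i) ∧ (∀ i, f i ∈ S) ∧ A = ∑ i, c i • f i}

/-- `𝓕` is a closed convex cone of PSD matrices with at least one free state. -/
def IsFreeStateCone {d : ℕ} (𝓕 : Set (Mat d)) : Prop :=
  (∀ A ∈ 𝓕, Matrix.PosSemidef A) ∧
  (∀ A ∈ 𝓕, ∀ c : ℝ, 0 ≤ c → c • A ∈ 𝓕) ∧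
  (∀ A ∈ 𝓕, ∀ B ∈ 𝓕, A + B ∈ 𝓕) ∧
  IsClosed 𝓕 ∧ (freeStates 𝓕).Nonempty

/-- `𝔽` is a set of POVM sets whose conic hull is closed. -/
def GoodPOVMFree {d l κ : ℕ} (𝔽 : Set (Fin κ → Fin l → Mat d)) : Prop :=
  (∀ M ∈ 𝔽, IsPOVMSet M) ∧ IsClosed (conicHull 𝔽)

/-- The collection `𝔽` of free POVM sets is closed under simulability. -/
def ClosedUnderSim {d : ℕ} (𝔽 : ∀ l κ : ℕ, Set (Fin κ → Fin l → Mat d)) : Prop :=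
  ∀ {l κ m τ : ℕ} (M : Fin κ → Fin l → Mat d) (N : Fin τ → Fin m → Mat d),
    M ∈ 𝔽 l κ → Simulable N M → N ∈ 𝔽 m τ

/-- Best fully free success probability. -/
def Dbest {d l κ m τ : ℕ} (p : Fin τ → ℝ) (Φ : Fin τ → Fin m → (Mat d →ₗ[ℂ] Mat d))
    (F : Set (Mat d)) (𝔽 : Set (Fin κ → Fin l → Mat d)) : ℝ :=
  sSup {v : ℝ | ∃ (σ : Mat d) (N : Fin κ → Fin l → Mat d),
    σ ∈ F ∧ N ∈ 𝔽 ∧ v = PsuccD p Φ σ N}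

/-- Best fully free error probability. -/
def Ebest {d l κ m τ : ℕ} (p : Fin τ → ℝ) (Φ : Fin τ → Fin m → (Mat d →ₗ[ℂ] Mat d))
    (F : Set (Mat d)) (𝔽 : Set (Fin κ → Fin l → Mat d)) : ℝ :=
  sInf {v : ℝ | ∃ (σ : Mat d) (N : Fin κ → Fin l → Mat d),
    σ ∈ F ∧ N ∈ 𝔽 ∧ v = PerrE p Φ σ N}

/-- Operator norm of a PSD matrix via the variational characterisation
`‖Z‖_op = sup_{η state} tr[Z η]`. -/
def opNormPSD {d : ℕ} (Z : Mat d) : ℝ :=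
  sSup {v : ℝ | ∃ η : Mat d, IsState η ∧ v = (Matrix.trace (Z * η)).re}

/-- The linear map `η ↦ tr[Z η] • χ`. -/
def funMap {d : ℕ} (Z χ : Mat d) : Mat d →ₗ[ℂ] Mat d where
  toFun η := Matrix.trace (Z * η) • χ
  map_add' η₁ η₂ := by
    simp [Matrix.mul_add, add_smul]
  map_smul' c η := by
    simp [Matrix.mul_smul, smul_smul]

/-- The coefficient `α = 1/(‖Z^ρ‖_op ∑_{a,x} tr[Z_{a|x}] p(x)⁻¹)`. -/
def alphaConst {d l κ : ℕ} (Zr : Mat d) (Zm : Fin κ → Fin l → Mat d)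
    (p : Fin κ → ℝ) : ℝ :=
  (opNormPSD Zr * ∑ x, ∑ a, (Matrix.trace (Zm x a)).re / p x)⁻¹

/-- The function `F_y(η) = α tr[Z^ρ η] ∑_a tr[Z_{a|y}] p(y)⁻¹`. -/
def FyD {d l κ : ℕ} (Zr : Mat d) (Zm : Fin κ → Fin l → Mat d) (p : Fin κ → ℝ)
    (y : Fin κ) (η : Mat d) : ℝ :=
  alphaConst Zr Zm p * (Matrix.trace (Zr * η)).re * (∑ a, (Matrix.trace (Zm y a)).re) / p y

/-- The discrimination game built from dual-feasible operators. -/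
def discPsi {d l κ : ℕ} (Zr : Mat d) (Zm : Fin κ → Fin l → Mat d) (p : Fin κ → ℝ)
    (J : ℕ) (χ : Mat d) : Fin κ → Fin (l + J) → (Mat d →ₗ[ℂ] Mat d) :=
  fun y b =>
    if h : (b : ℕ) < l then
      (((alphaConst Zr Zm p) / p y : ℝ) : ℂ) • funMap Zr (Zm y ⟨b, h⟩)
    else
      ((J : ℂ))⁻¹ • (funMap 1 χ -
        (((alphaConst Zr Zm p) * (∑ a, (Matrix.trace (Zm y a)).re) / p y : ℝ) : ℂ) •
          funMap Zr χ)

/-- The coefficient `β = 1/(2‖Y^ρ‖_op ∑_{a,x} tr[Y_{a|x}] p(x)⁻¹)`. -/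
def betaConst {d l κ : ℕ} (Yr : Mat d) (Ym : Fin κ → Fin l → Mat d)
    (p : Fin κ → ℝ) : ℝ :=
  (2 * opNormPSD Yr * ∑ x, ∑ a, (Matrix.trace (Ym x a)).re / p x)⁻¹

/-- The function `G_y(η) = β tr[Y^ρ η] ∑_a tr[Y_{a|y}] p(y)⁻¹`. -/
def GyE {d l κ : ℕ} (Yr : Mat d) (Ym : Fin κ → Fin l → Mat d) (p : Fin κ → ℝ)
    (y : Fin κ) (η : Mat d) : ℝ :=
  betaConst Yr Ym p * (Matrix.trace (Yr * η)).re * (∑ a, (Matrix.trace (Ym y a)).re) / p y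

/-- The state `ξ_y = (∑_b p(b|y) Y_{b|y}) / (∑_b p(b|y) tr[Y_{b|y}])`. -/
def xiE {d l κ : ℕ} (Ym : Fin κ → Fin l → Mat d) (pc : Fin κ → Fin l → ℝ)
    (y : Fin κ) : Mat d :=
  ((∑ b, pc y b * (Matrix.trace (Ym y b)).re)⁻¹ : ℝ) • ∑ b, pc y b • Ym y b

/-- The exclusion game built from dual-feasible operators. -/
def exclPsi {d l κ : ℕ} (Yr : Mat d) (Ym : Fin κ → Fin l → Mat d) (p : Fin κ → ℝ)
    (pc : Fin κ → Fin l → ℝ) : Fin κ → Fin (l + 1) → (Mat d →ₗ[ℂ] Mat d) :=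
  fun y b =>
    if h : (b : ℕ) < l then
      ((betaConst Yr Ym p / p y : ℝ) : ℂ) • funMap Yr (Ym y ⟨b, h⟩)
    else
      funMap 1 (xiE Ym pc y) -
        ((betaConst Yr Ym p * (∑ a, (Matrix.trace (Ym y a)).re) / p y : ℝ) : ℂ) •
          funMap Yr (xiE Ym pc y)



section Helpers

lemma psd_trace_nonneg' {d : ℕ} {A : Mat d} (hA : A.PosSemidef) : 0 ≤ A.trace := by
  rw [Matrix.trace]
  apply Finset.sum_nonneg
  intro i _
  have h := hA.2 (Finsupp.single i 1)
  simpa using h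

lemma psd_smul {d : ℕ} {A : Mat d} (hA : A.PosSemidef) {c : ℝ} (hc : 0 ≤ c) :
    (c • A).PosSemidef := by
  exact hA.smul hc

lemma psd_sum {d : ℕ} {ι : Type*} (s : Finset ι) (f : ι → Mat d)
    (h : ∀ i ∈ s, (f i).PosSemidef) : (∑ i ∈ s, f i).PosSemidef := by
  induction s using Finset.cons_induction with
  | empty => simpa using Matrix.PosSemidef.zero
  | cons a s ha ih =>
      rw [Finset.sum_cons]
      exact (h a (Finset.mem_cons_self a s)).add
        (ih fun i hi => h i (Finset.mem_cons_of_mem hi))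

open scoped MatrixOrder in
lemma trace_mul_psd_nonneg {d : ℕ} {A B : Mat d} (hA : A.PosSemidef) (hB : B.PosSemidef) :
    0 ≤ Matrix.trace (A * B) := by
  classical
  obtain ⟨X, hX, -, hBX⟩ := CFC.exists_sqrt_of_isSelfAdjoint_of_quasispectrumRestricts
    hB.isHermitian (QuasispectrumRestricts.nnreal_of_nonneg hB.nonneg)
  have h1 : A * B = A * (X * X) := by rw [hBX]
  have h2 : Matrix.trace (A * (X * X)) = Matrix.trace (X * A * X) := by
    rw [← Matrix.mul_assoc, Matrix.trace_mul_cycle]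
  have hps : (X * A * X).PosSemidef := by
    have := hA.conjTranspose_mul_mul_same X
    rwa [show X.conjTranspose = X from hX] at this
  rw [h1, h2]
  exact psd_trace_nonneg' hps

lemma trace_re_nonneg {d : ℕ} {A B : Mat d} (hA : A.PosSemidef) (hB : B.PosSemidef) :
    0 ≤ (Matrix.trace (A * B)).re :=
  (Complex.le_def.mp (trace_mul_psd_nonneg hA hB)).1

lemma trace_im_zero {d : ℕ} {A B : Mat d} (hA : A.PosSemidef) (hB : B.PosSemidef) :
    (Matrix.trace (A * B)).im = 0 :=
  ((Complex.le_def.mp (trace_mul_psd_nonneg hA hB)).2).symm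

lemma trace_mul_le_trace {d : ℕ} {N B : Mat d} (h1N : ((1 : Mat d) - N).PosSemidef)
    (hB : B.PosSemidef) : (Matrix.trace (N * B)).re ≤ (Matrix.trace B).re := by
  have h := trace_re_nonneg h1N hB
  have he : Matrix.trace (((1 : Mat d) - N) * B) = Matrix.trace B - Matrix.trace (N * B) := by
    rw [Matrix.sub_mul, Matrix.one_mul, Matrix.trace_sub]
  rw [he] at h
  simp only [Complex.sub_re] at h
  linarith

lemma simulable_isPOVMSet {d l κ m τ : ℕ} {N : Fin τ → Fin m → Mat d}
    {M : Fin κ → Fin l → Mat d} (hM : IsPOVMSet M) (hsim : Simulable N M) :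
    IsPOVMSet N := by
  obtain ⟨nz, q, r, s, hq, hr, hs, hNeq⟩ := hsim
  constructor
  · intro y b
    rw [hNeq y b]
    refine psd_sum _ _ fun z _ => psd_sum _ _ fun x _ => psd_sum _ _ fun a _ => ?_
    exact psd_smul (hM.1 x a) (by
      have := (hq.1 z); have := (hr y z).1 x; have := (hs y z a).1 b; positivity)
  · intro y
    have step1 : ∑ b, N y b
        = ∑ z, ∑ x, ∑ a, (q z * r y z x) • M x a := by
      calc ∑ b, N y b = ∑ b, ∑ z, ∑ x, ∑ a, (q z * r y z x * s y z a b) • M x a := by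
            simp_rw [hNeq y]
        _ = ∑ z, ∑ b, ∑ x, ∑ a, (q z * r y z x * s y z a b) • M x a := Finset.sum_comm
        _ = ∑ z, ∑ x, ∑ b, ∑ a, (q z * r y z x * s y z a b) • M x a := by
            exact Finset.sum_congr rfl fun z _ => Finset.sum_comm
        _ = ∑ z, ∑ x, ∑ a, ∑ b, (q z * r y z x * s y z a b) • M x a := by
            exact Finset.sum_congr rfl fun z _ => Finset.sum_congr rfl fun x _ => Finset.sum_comm
        _ = ∑ z, ∑ x, ∑ a, (q z * r y z x) • M x a := by
            refine Finset.sum_congr rfl fun z _ => Finset.sum_congr rfl fun x _ =>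
              Finset.sum_congr rfl fun a _ => ?_
            rw [← Finset.sum_smul]
            congr 1
            rw [← Finset.mul_sum, (hs y z a).2, mul_one]
    rw [step1]
    have step2 : ∀ z, ∑ x, ∑ a, (q z * r y z x) • M x a = q z • (1 : Mat d) := by
      intro z
      have : ∀ x, ∑ a, (q z * r y z x) • M x a = (q z * r y z x) • (1 : Mat d) := by
        intro x
        rw [← Finset.smul_sum, hM.2 x]
      simp_rw [this, ← Finset.sum_smul, ← Finset.mul_sum, (hr y z).2, mul_one]
    simp_rw [step2, ← Finset.sum_smul, hq.2, one_smul]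

lemma funMap_apply {d : ℕ} (Z χ η : Mat d) : funMap Z χ η = Matrix.trace (Z * η) • χ := rfl

lemma discPsi_apply_lt {d l κ : ℕ} (Zr : Mat d) (Zm : Fin κ → Fin l → Mat d) (p : Fin κ → ℝ)
    (J : ℕ) (χ : Mat d) (y : Fin κ) (b : Fin (l + J)) (h : (b : ℕ) < l) (η : Mat d) :
    discPsi Zr Zm p J χ y b η =
      ((alphaConst Zr Zm p / p y : ℝ) : ℂ) • (Matrix.trace (Zr * η) • Zm y ⟨b, h⟩) := by
  simp only [discPsi, dif_pos h, LinearMap.smul_apply, funMap_apply]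

lemma discPsi_apply_ge {d l κ : ℕ} (Zr : Mat d) (Zm : Fin κ → Fin l → Mat d) (p : Fin κ → ℝ)
    (J : ℕ) (χ : Mat d) (y : Fin κ) (b : Fin (l + J)) (h : ¬ (b : ℕ) < l) (η : Mat d) :
    discPsi Zr Zm p J χ y b η =
      ((J : ℂ))⁻¹ • (Matrix.trace η • χ -
        ((alphaConst Zr Zm p * (∑ a, (Matrix.trace (Zm y a)).re) / p y : ℝ) : ℂ) •
          (Matrix.trace (Zr * η) • χ)) := by
  simp only [discPsi, dif_neg h, LinearMap.smul_apply, LinearMap.sub_apply, funMap_apply,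
    Matrix.one_mul]

end Helpers

/-- lower bound on the success probability of any state/POVM-set pair
in the constructed discrimination game. -/
theorem disc_game_resourceful_bound {d l κ : ℕ} (hd : 1 ≤ d)
    (𝓕 : Set (Mat d)) (h𝓕 : IsFreeStateCone 𝓕)
    (𝔽 : Set (Fin κ → Fin l → Mat d)) (h𝔽 : GoodPOVMFree 𝔽) (h𝔽ne : 𝔽.Nonempty)
    (Zr : Mat d) (hZr : Zr.PosSemidef) (hZrne : Zr ≠ 0)
    (hZrF : ∀ σ ∈ freeStates 𝓕, (Matrix.trace (Zr * σ)).re ≤ 1)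
    (Zm : Fin κ → Fin l → Mat d) (hZm : ∀ x a, (Zm x a).PosSemidef)
    (hZmne : Zm ≠ 0)
    (hZmF : ∀ N ∈ 𝔽, (∑ x, ∑ a, (Matrix.trace (Zm x a * N x a)).re) ≤ 1)
    (p : Fin κ → ℝ) (hp : IsPMF p) (hppos : ∀ x, 0 < p x)
    (J : ℕ) (hJ : 1 ≤ J) (χ : Mat d) (hχ : IsState χ)
    (ρ' : Mat d) (hρ' : IsState ρ')
    (M' : Fin κ → Fin l → Mat d) (hM' : IsPOVMSet M') :
    alphaConst Zr Zm p * (Matrix.trace (Zr * ρ')).re *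
        (∑ y, ∑ b, (Matrix.trace (M' y b * Zm y b)).re) ≤
      PsuccD p (discPsi Zr Zm p J χ) ρ' M' := by
  classical
  set α := alphaConst Zr Zm p with hαdef
  set t : ℝ := (Matrix.trace (Zr * ρ')).re with htdef
  have htr : Matrix.trace (Zr * ρ') = (t : ℂ) := by
    apply Complex.ext
    · simp [htdef]
    · simp [htdef, trace_im_zero hZr hρ'.1]
  set Φ := discPsi Zr Zm p J χ with hΦdef
  -- the canonical simulable POVM set: M' extended by zero
  set N₀ : Fin κ → Fin (l + J) → Mat d :=
    fun y b => if h : (b : ℕ) < l then M' y ⟨b, h⟩ else 0 with hN₀def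
  have hsim : Simulable N₀ M' := by
    refine ⟨1, fun _ => 1, fun y z x => if x = y then 1 else 0,
      fun y z a b => if b = Fin.castAdd J a then 1 else 0, ⟨fun _ => zero_le_one, by simp⟩,
      fun y z => ⟨fun x => by dsimp only; split_ifs <;> norm_num, by simp⟩,
      fun y z a => ⟨fun b => by dsimp only; split_ifs <;> norm_num, by simp⟩, ?_⟩
    intro y b
    rw [Fin.sum_univ_one]
    simp only [one_mul, ite_mul, one_mul, zero_mul, ite_smul, zero_smul]
    rw [Finset.sum_comm]
    simp only [Finset.sum_ite_eq', Finset.mem_univ, if_true]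
    by_cases h : (b : ℕ) < l
    · rw [hN₀def]
      simp only [dif_pos h]
      rw [Finset.sum_eq_single (⟨(b : ℕ), h⟩ : Fin l)]
      · rw [if_pos (by apply Fin.ext; simp), one_smul]
      · intro a _ hne
        rw [if_neg]
        intro e
        exact hne (Fin.ext (by simpa using (congrArg Fin.val e).symm))
      · intro habs; exact absurd (Finset.mem_univ _) habs
    · rw [hN₀def]
      simp only [dif_neg h]
      symm
      apply Finset.sum_eq_zero
      intro a _
      rw [if_neg]
      intro e
      exact h (by rw [e]; simpa using a.isLt)
  -- the bound for bounded-above-ness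
  set bound : Fin κ → Fin (l + J) → ℝ := fun y b =>
    if h : (b : ℕ) < l then |α / p y * t| * (Matrix.trace (Zm y ⟨b, h⟩)).re
    else |(J : ℝ)⁻¹ * (1 - α * (∑ a, (Matrix.trace (Zm y a)).re) / p y * t)| with hbdef
  have hterm_le : ∀ (N : Fin κ → Fin (l + J) → Mat d), IsPOVMSet N →
      ∀ y b, (Matrix.trace (N y b * Φ y b ρ')).re ≤ bound y b := by
    intro N hN y b
    have h1N : ((1 : Mat d) - N y b).PosSemidef := by
      have he : (1 : Mat d) - N y b = ∑ b' ∈ Finset.univ.erase b, N y b' := by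
        rw [Finset.sum_erase_eq_sub (Finset.mem_univ b), hN.2 y]
      rw [he]
      exact psd_sum _ _ fun b' _ => hN.1 y b'
    by_cases h : (b : ℕ) < l
    · rw [hbdef]
      simp only [dif_pos h]
      rw [hΦdef, discPsi_apply_lt Zr Zm p J χ y b h, htr, smul_smul, ← Complex.ofReal_mul,
        Matrix.mul_smul, Matrix.trace_smul, smul_eq_mul, Complex.re_ofReal_mul]
      have hx0 : 0 ≤ (Matrix.trace (N y b * Zm y ⟨b, h⟩)).re :=
        trace_re_nonneg (hN.1 y b) (hZm y ⟨b, h⟩)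
      have hxle : (Matrix.trace (N y b * Zm y ⟨b, h⟩)).re ≤ (Matrix.trace (Zm y ⟨b, h⟩)).re :=
        trace_mul_le_trace h1N (hZm y ⟨b, h⟩)
      calc α / p y * t * (Matrix.trace (N y b * Zm y ⟨b, h⟩)).re
          ≤ |α / p y * t| * (Matrix.trace (N y b * Zm y ⟨b, h⟩)).re :=
            mul_le_mul_of_nonneg_right (le_abs_self _) hx0
        _ ≤ |α / p y * t| * (Matrix.trace (Zm y ⟨b, h⟩)).re :=
            mul_le_mul_of_nonneg_left hxle (abs_nonneg _)
    · rw [hbdef]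
      simp only [dif_neg h]
      have hc : Φ y b ρ' =
          (((J : ℝ)⁻¹ * (1 - α * (∑ a, (Matrix.trace (Zm y a)).re) / p y * t) : ℝ) : ℂ) • χ := by
        rw [hΦdef, discPsi_apply_ge Zr Zm p J χ y b h, htr, hρ'.2]
        rw [smul_smul, ← sub_smul, smul_smul]
        congr 1
        push_cast
        ring
      rw [hc, Matrix.mul_smul, Matrix.trace_smul, smul_eq_mul, Complex.re_ofReal_mul]
      have hx0 : 0 ≤ (Matrix.trace (N y b * χ)).re :=
        trace_re_nonneg (hN.1 y b) hχ.1
      have hxle : (Matrix.trace (N y b * χ)).re ≤ 1 := by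
        have := trace_mul_le_trace h1N hχ.1
        rwa [hχ.2, Complex.one_re] at this
      calc (J : ℝ)⁻¹ * (1 - α * (∑ a, (Matrix.trace (Zm y a)).re) / p y * t) *
            (Matrix.trace (N y b * χ)).re
          ≤ |(J : ℝ)⁻¹ * (1 - α * (∑ a, (Matrix.trace (Zm y a)).re) / p y * t)| *
            (Matrix.trace (N y b * χ)).re :=
            mul_le_mul_of_nonneg_right (le_abs_self _) hx0
        _ ≤ |(J : ℝ)⁻¹ * (1 - α * (∑ a, (Matrix.trace (Zm y a)).re) / p y * t)| * 1 :=
            mul_le_mul_of_nonneg_left hxle (abs_nonneg _)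
        _ = _ := mul_one _
  have hbdd : BddAbove {v : ℝ | ∃ N : Fin κ → Fin (l + J) → Mat d,
      Simulable N M' ∧ v = gameValue p Φ ρ' N} := by
    refine ⟨∑ y, ∑ b, p y * bound y b, ?_⟩
    rintro v ⟨N, hsimN, rfl⟩
    have hNpovm := simulable_isPOVMSet hM' hsimN
    refine Finset.sum_le_sum fun y _ => Finset.sum_le_sum fun b _ => ?_
    exact mul_le_mul_of_nonneg_left (hterm_le N hNpovm y b) (hp.1 y)
  -- value of N₀
  have hval : gameValue p Φ ρ' N₀ =
      α * t * (∑ y, ∑ b, (Matrix.trace (M' y b * Zm y b)).re) := by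
    rw [gameValue, Finset.mul_sum]
    refine Finset.sum_congr rfl fun y _ => ?_
    rw [Fin.sum_univ_add]
    have hzero : ∀ i : Fin J,
        p y * (Matrix.trace (N₀ y (Fin.natAdd l i) * Φ y (Fin.natAdd l i) ρ')).re = 0 := by
      intro i
      have : N₀ y (Fin.natAdd l i) = 0 := by
        rw [hN₀def]
        exact dif_neg (by simp)
      rw [this, Matrix.zero_mul, Matrix.trace_zero, Complex.zero_re, mul_zero]
    rw [Finset.sum_congr rfl fun i _ => hzero i, Finset.sum_const, smul_zero, add_zero,
      Finset.mul_sum]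
    refine Finset.sum_congr rfl fun i _ => ?_
    have hi : ((Fin.castAdd J i : Fin (l + J)) : ℕ) < l := by simpa using i.isLt
    have hN0 : N₀ y (Fin.castAdd J i) = M' y i := by
      rw [hN₀def]
      exact (dif_pos hi).trans (congrArg (M' y) (Fin.ext (by simp)))
    have hΦi : Φ y (Fin.castAdd J i) ρ' =
        ((α / p y : ℝ) : ℂ) • ((t : ℂ) • Zm y i) := by
      rw [hΦdef, discPsi_apply_lt Zr Zm p J χ y (Fin.castAdd J i) hi, htr]
      have he : (⟨((Fin.castAdd J i : Fin (l + J)) : ℕ), hi⟩ : Fin l) = i := Fin.ext (by simp)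
      rw [he]
    rw [hN0, hΦi, smul_smul, ← Complex.ofReal_mul, Matrix.mul_smul, Matrix.trace_smul,
      smul_eq_mul, Complex.re_ofReal_mul]
    have hpy := (hppos y).ne'
    field_simp
  rw [PsuccD]
  calc α * t * (∑ y, ∑ b, (Matrix.trace (M' y b * Zm y b)).re)
      = gameValue p Φ ρ' N₀ := hval.symm
    _ ≤ _ := le_csSup hbdd ⟨N₀, hsim, rfl⟩


end MultiObject
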